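/- If q is odd, then every arc in the projective plane PG(2,q) has at most q+1 points. -/

import Mathlib

/-- The projective plane `PG(2,q)` over a field `K`. -/
abbrev PG2 (K : Type*) [Field K] := Projectivization K (Fin 3 → K)

/-- Three points of `PG(2,K)` are collinear iff their representative vectors are
linearly dependent. -/
def Collin3 {K : Type*} [Field K] (a b c : PG2 K) : Prop :=
  ¬ LinearIndependent K ![a.rep, b.rep, c.rep]

/-- A set of points is an arc if no three distinct points of it are collinear. -/
def IsArc {K : Type*} [Field K] (S : Set (PG2 K)) : Prop :=
  ∀ a ∈ S, ∀ b ∈ S, ∀ c ∈ S, a ≠ b → a ≠ c → b ≠ c → ¬ Collin3 a b c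

/-!
Joining a point `p` of an arc `S` to the other points of `S` gives distinct lines through `p`, and
there are only `q + 1` of them, so `|S| ≤ q + 2`. If `|S| = q + 2`, every line through a point of
`S` is a secant. Then every line through a point `Q` off `S` meets `S` in `0` or `2` points, so
these lines split `S` into pairs and `q + 2` is even.
-/

open Module
open scoped LinearAlgebra.Projectivization

namespace Projectivization

variable {K V : Type*} [Field K] [AddCommGroup V] [Module K V]

lemma rep_mem_submodule_iff {a b : ℙ K V} : a.rep ∈ b.submodule ↔ a = b := by
  rw [submodule_eq, Submodule.mem_span_singleton,
    ← mk_eq_mk_iff' K _ _ a.rep_nonzero b.rep_nonzero, mk_rep, mk_rep]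

/-- For `a = b` this is the point `a` itself rather than a line. -/
def line (a b : ℙ K V) : Submodule K V := a.submodule ⊔ b.submodule

lemma line_comm (a b : ℙ K V) : line a b = line b a := sup_comm _ _

lemma rep_mem_line_left (a b : ℙ K V) : a.rep ∈ line a b :=
  Submodule.mem_sup_left (by simp [submodule_eq, Submodule.mem_span_singleton_self])

lemma rep_mem_line_right (a b : ℙ K V) : b.rep ∈ line a b :=
  line_comm b a ▸ rep_mem_line_left b a

lemma line_eq_span_pair (a b : ℙ K V) : line a b = Submodule.span K {a.rep, b.rep} := by
  rw [line, submodule_eq, submodule_eq, Submodule.span_insert]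

lemma finrank_line {a b : ℙ K V} (hab : a ≠ b) : finrank K (line a b) = 2 := by
  rw [line_eq_span_pair, ← Matrix.range_cons_cons_empty _ _ ![],
    finrank_span_eq_card (linearIndependent_pair_iff_ne.2 hab), Fintype.card_fin]

lemma not_linearIndependent_iff_rep_mem_line {a b c : ℙ K V} (hbc : b ≠ c) :
    ¬ LinearIndependent K ![a.rep, b.rep, c.rep] ↔ a.rep ∈ line b c := by
  rw [Matrix.vecCons, linearIndependent_finCons, Matrix.range_cons_cons_empty, ← line_eq_span_pair]
  simp [linearIndependent_pair_iff_ne.2 hbc]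

lemma line_eq_of_rep_mem {a b c d : ℙ K V} (hab : a ≠ b) (hcd : c ≠ d)
    (hc : c.rep ∈ line a b) (hd : d.rep ∈ line a b) : line c d = line a b := by
  have : FiniteDimensional K (line a b) := .of_finrank_pos (by rw [finrank_line hab]; norm_num)
  refine Submodule.eq_of_le_of_finrank_eq ?_ (by rw [finrank_line hab, finrank_line hcd])
  rw [line_eq_span_pair c d, Submodule.span_le]
  rintro _ (rfl | rfl)
  exacts [hc, hd]

/-- The lines through `p` embed, via the quotient map, into the points of the projective line
`ℙ(V ⧸ p)`. -/
lemma ncard_image_line_le [Finite K] (hV : finrank K V = 3) (p : ℙ K V) :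
    (line p '' {p}ᶜ).ncard ≤ Nat.card K + 1 := by
  have : Module.Finite K V := Module.finite_of_finrank_pos (by omega)
  have hW : finrank K (V ⧸ p.submodule) = 2 := by
    have := p.submodule.finrank_quotient_add_finrank
    rw [finrank_submodule] at this
    omega
  have hcomap (b : ℙ K V) :
      ((line p b).map p.submodule.mkQ).comap p.submodule.mkQ = line p b := by
    rw [Submodule.comap_map_mkQ, line, ← sup_assoc, sup_idem]
  have hmap (b : ℙ K V) (hb : b ≠ p) :
      finrank K ((line p b).map p.submodule.mkQ) = 1 := by
    rw [line, Submodule.map_sup, Submodule.mkQ_map_self, bot_sup_eq, submodule_eq b,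
      Submodule.map_span, Set.image_singleton]
    refine finrank_span_singleton ?_
    rw [Submodule.mkQ_apply, ne_eq, Submodule.Quotient.mk_eq_zero, rep_mem_submodule_iff]
    exact hb
  have : Finite (V ⧸ p.submodule) := Module.finite_of_finite K
  have hfin : {H : Submodule K (V ⧸ p.submodule) | finrank K H = 1}.Finite :=
    Set.finite_coe_iff.1 (.of_equiv _ (equivSubmodule K _))
  calc (line p '' {p}ᶜ).ncard
      ≤ {H : Submodule K (V ⧸ p.submodule) | finrank K H = 1}.ncard := by
        refine Set.ncard_le_ncard_of_injOn (Submodule.map p.submodule.mkQ) ?_ ?_ hfin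
        · rintro _ ⟨b, hb, rfl⟩
          exact hmap b hb
        · rintro _ ⟨b, -, rfl⟩ _ ⟨c, -, rfl⟩ h
          rw [← hcomap b, h, hcomap c]
    _ = Nat.card (ℙ K (V ⧸ p.submodule)) :=
        (Nat.card_coe_set_eq _).symm.trans (Nat.card_congr (equivSubmodule K _).symm)
    _ = Nat.card K + 1 := card_of_finrank_two K _ hW

end Projectivization

open Projectivization

lemma card_PG2 (K : Type*) [Field K] [Finite K] :
    Nat.card (PG2 K) = Nat.card K ^ 2 + Nat.card K + 1 := by
  rw [card_of_finrank K _ (finrank_fin_fun K)]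
  simp only [Finset.sum_range_succ, Finset.sum_range_zero]
  ring

lemma collin3_iff_rep_mem_line {K : Type*} [Field K] {a b c : PG2 K} (hbc : b ≠ c) :
    Collin3 a b c ↔ a.rep ∈ line b c :=
  not_linearIndependent_iff_rep_mem_line hbc

namespace IsArc

variable {K : Type*} [Field K] {S : Set (PG2 K)}

lemma rep_notMem_line (hS : IsArc S) {a b c : PG2 K} (ha : a ∈ S) (hb : b ∈ S) (hc : c ∈ S)
    (hab : a ≠ b) (hac : a ≠ c) (hbc : b ≠ c) : a.rep ∉ line b c :=
  (collin3_iff_rep_mem_line hbc).not.1 (hS a ha b hb c hc hab hac hbc)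

lemma injOn_line (hS : IsArc S) {p : PG2 K} (hp : p ∈ S) : Set.InjOn (line p) (S \ {p}) := by
  rintro b ⟨hb, hbp⟩ c ⟨hc, hcp⟩ h
  by_contra hbc
  exact hS.rep_notMem_line hc hp hb hcp (Ne.symm hbc) (Ne.symm hbp)
    (h ▸ rep_mem_line_right p c)

lemma eq_of_line_eq (hS : IsArc S) {Q x y z : PG2 K} (hQ : Q ∉ S) (hx : x ∈ S) (hy : y ∈ S)
    (hz : z ∈ S) (hxy : x ≠ y) (hxz : x ≠ z) (hyx : line Q y = line Q x)
    (hzx : line Q z = line Q x) : y = z := by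
  by_contra hyz
  have hQx : Q ≠ x := (ne_of_mem_of_not_mem hx hQ).symm
  have hline : line x y = line Q x :=
    line_eq_of_rep_mem hQx hxy (rep_mem_line_right Q x) (hyx ▸ rep_mem_line_right Q y)
  exact hS.rep_notMem_line hz hx hy (Ne.symm hxz) (Ne.symm hyz) hxy
    (hline ▸ hzx ▸ rep_mem_line_right Q z)

variable [Finite K]

lemma ncard_sdiff_singleton_le (hS : IsArc S) {p : PG2 K} (hp : p ∈ S) :
    (S \ {p}).ncard ≤ Nat.card K + 1 :=
  calc (S \ {p}).ncard = (line p '' (S \ {p})).ncard :=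
        (hS.injOn_line hp).ncard_image.symm
    _ ≤ (line p '' {p}ᶜ).ncard := Set.ncard_le_ncard (Set.image_mono fun _ hx => hx.2)
    _ ≤ Nat.card K + 1 := ncard_image_line_le (finrank_fin_fun K) p

lemma ncard_le (hS : IsArc S) : S.ncard ≤ Nat.card K + 2 := by
  rcases S.eq_empty_or_nonempty with rfl | ⟨p, hp⟩
  · simp
  · have := Set.ncard_sdiff_singleton_add_one hp S.toFinite
    have := hS.ncard_sdiff_singleton_le hp
    omega

/-- In a `(q + 2)`-arc every line through a point of the arc is a secant. -/
lemma exists_ne_line_eq (hS : IsArc S) (hcard : S.ncard = Nat.card K + 2) {b Q : PG2 K}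
    (hb : b ∈ S) (hQ : Q ∉ S) : ∃ b' ∈ S, b' ≠ b ∧ line Q b' = line Q b := by
  have hQb : Q ≠ b := ne_of_mem_of_not_mem hb hQ |>.symm
  have hsecant : line b '' (S \ {b}) = line b '' {b}ᶜ := by
    refine Set.eq_of_subset_of_ncard_le (Set.image_mono fun _ hx => hx.2) ?_
    rw [(hS.injOn_line hb).ncard_image]
    have := Set.ncard_sdiff_singleton_add_one hb S.toFinite
    have := ncard_image_line_le (finrank_fin_fun K) b
    omega
  obtain ⟨b', ⟨hb', hb'b⟩, hline⟩ : line b Q ∈ line b '' (S \ {b}) :=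
    hsecant ▸ Set.mem_image_of_mem _ hQb
  have hbb' : b ≠ b' := Ne.symm hb'b
  have hQ' : Q.rep ∈ line b b' := hline ▸ rep_mem_line_right b Q
  refine ⟨b', hb', hb'b, ?_⟩
  rw [line_eq_of_rep_mem hbb' (ne_of_mem_of_not_mem hb' hQ).symm hQ' (rep_mem_line_right b b'),
    line_eq_of_rep_mem hbb' hQb hQ' (rep_mem_line_left b b')]

/-- The lines through a point off a `(q + 2)`-arc partition the arc into pairs. -/
lemma even_ncard (hS : IsArc S) (hcard : S.ncard = Nat.card K + 2) {Q : PG2 K} (hQ : Q ∉ S) :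
    Even S.ncard := by
  classical
  set T := S.toFinite.toFinset
  have hfiber : ∀ L ∈ T.image (line Q), Even ({x ∈ T | line Q x = L} : Finset _).card := by
    simp only [Finset.mem_image]
    rintro _ ⟨b, hb, rfl⟩
    rw [Set.Finite.mem_toFinset] at hb
    obtain ⟨b', hb', hb'b, hline⟩ := hS.exists_ne_line_eq hcard hb hQ
    suffices {x ∈ T | line Q x = line Q b} = {b, b'} by
      rw [this, Finset.card_pair (Ne.symm hb'b)]
      exact even_two
    ext x
    simp only [Finset.mem_filter, Set.Finite.mem_toFinset, Finset.mem_insert,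
      Finset.mem_singleton, T]
    constructor
    · rintro ⟨hx, hxb⟩
      by_contra! hne
      exact hne.2 (hS.eq_of_line_eq hQ hb hb' hx (Ne.symm hb'b) (Ne.symm hne.1) hline hxb).symm
    · rintro (rfl | rfl)
      exacts [⟨hb, rfl⟩, ⟨hb', hline⟩]
  rw [Set.ncard_eq_toFinset_card S S.toFinite,
    Finset.card_eq_sum_card_fiberwise fun x hx => Finset.mem_image_of_mem (line Q) hx]
  exact Finset.even_sum _ hfiber

end IsArc

/-- If `q` is odd then every arc in `PG(2,q)` has at most `q + 1` points. -/
theorem stmt_4 (K : Type*) [Field K] [Fintype K] (hodd : Odd (Fintype.card K))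
    (S : Set (PG2 K)) (hS : IsArc S) :
    S.ncard ≤ Fintype.card K + 1 := by
  rw [← Nat.card_eq_fintype_card] at hodd ⊢
  by_contra! hlt
  have hcard : S.ncard = Nat.card K + 2 := le_antisymm hS.ncard_le hlt
  obtain ⟨Q, hQ⟩ : ∃ Q, Q ∉ S := by
    by_contra! hall
    have hq : 2 ≤ Nat.card K := Finite.one_lt_card
    rw [Set.eq_univ_of_forall hall, Set.ncard_univ, card_PG2] at hcard
    nlinarith
  have heven := hS.even_ncard hcard hQ
  rw [hcard] at heven
  exact Nat.not_even_iff_odd.2 (hodd.add_even even_two) heven
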